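/- arXiv:2111.02708 — 4 statements merged into one kernel-verified Lean document; each statement's English description precedes it below -/
import Mathlib

section
/- Let G and H be symmetric positive definite n×n matrices with H ⪯ G, and let u ∈ ℝⁿ with (G - H)u ≠ 0. Define SR1(G, H, u) := G - ((G - H)u uᵀ(G - H))/(uᵀ(G - H)u). Then H ⪯ SR1(G, H, u) ⪯ G. -/
open Matrix

noncomputable def SR1 {n : ℕ} (G H : Matrix (Fin n) (Fin n) ℝ) (u : Fin n → ℝ) :
    Matrix (Fin n) (Fin n) ℝ :=
  G - (u ⬝ᵥ (G - H).mulVec u)⁻¹ • ((G - H) * Matrix.vecMulVec u u * (G - H))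

theorem stmt11 {n : ℕ} (G H : Matrix (Fin n) (Fin n) ℝ)
    (hG : G.PosDef) (hH : H.PosDef) (hHG : (G - H).PosSemidef)
    (u : Fin n → ℝ) (hu : (G - H).mulVec u ≠ 0) :
    (SR1 G H u - H).PosSemidef ∧ (G - SR1 G H u).PosSemidef := by
  set A := G - H with hAdef
  have hAsym : A.IsHermitian := hHG.1
  set v := A *ᵥ u with hvdef
  set c := u ⬝ᵥ A *ᵥ u with hcdef
  have hc : 0 < c := by
    rcases lt_or_eq_of_le (hHG.dotProduct_mulVec_nonneg u) with h | h
    · simpa using h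
    · exact absurd ((hHG.dotProduct_mulVec_zero_iff u).mp (by simpa using h.symm)) hu
  -- symmetry entries
  have hsymm : ∀ i j, A i j = A j i := by
    intro i j
    conv_lhs => rw [← hAsym]
    simp [conjTranspose_apply]
  have hAt : Aᵀ = A := by
    ext i j
    exact hsymm j i
  -- key matrix identity
  have hkey : A * Matrix.vecMulVec u u * A = Matrix.vecMulVec v v := by
    ext i j
    simp only [mul_apply, vecMulVec_apply, hvdef, mulVec, dotProduct, Finset.sum_mul,
      Finset.mul_sum]
    rw [Finset.sum_comm]
    conv_rhs => rw [Finset.sum_comm]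
    refine Finset.sum_congr rfl fun l _ => Finset.sum_congr rfl fun k _ => ?_
    rw [hsymm j k]
    ring
  -- quadratic form of vecMulVec
  have hquad : ∀ x : Fin n → ℝ, x ⬝ᵥ (Matrix.vecMulVec v v) *ᵥ x = (v ⬝ᵥ x) ^ 2 := by
    intro x
    simp only [dotProduct, mulVec, vecMulVec_apply, Finset.mul_sum, Finset.sum_mul, sq]
    rw [Finset.sum_comm]
    refine Finset.sum_congr rfl fun i _ => Finset.sum_congr rfl fun j _ => ?_
    ring
  have hherm : (c⁻¹ • Matrix.vecMulVec v v).IsHermitian := by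
    ext i j
    simp [conjTranspose_apply, vecMulVec_apply, mul_comm]
  -- Cauchy-Schwarz : (v ⬝ᵥ x)^2 ≤ c * (x ⬝ᵥ A *ᵥ x)
  obtain ⟨B, hB⟩ : ∃ B : Matrix (Fin n) (Fin n) ℝ, A = Bᴴ * B :=
    by open scoped MatrixOrder Matrix.Norms.L2Operator in exact CStarAlgebra.nonneg_iff_eq_star_mul_self.mp hHG.nonneg
  have hdot : ∀ x y : Fin n → ℝ, x ⬝ᵥ A *ᵥ y = (B *ᵥ x) ⬝ᵥ (B *ᵥ y) := by
    intro x y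
    rw [hB, ← mulVec_mulVec, dotProduct_mulVec]
    congr 1
    rw [show Bᴴ = Bᵀ from rfl, ← mulVec_transpose, transpose_transpose]
  have hswap : ∀ x : Fin n → ℝ, v ⬝ᵥ x = u ⬝ᵥ A *ᵥ x := by
    intro x
    rw [dotProduct_mulVec, ← mulVec_transpose, hAt, hvdef]
  have hCS : ∀ x : Fin n → ℝ, (v ⬝ᵥ x) ^ 2 ≤ c * (x ⬝ᵥ A *ᵥ x) := by
    intro x
    rw [hswap x, hcdef, hdot u u, hdot u x, hdot x x]
    simp only [dotProduct]
    calc (∑ i, (B *ᵥ u) i * (B *ᵥ x) i) ^ 2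
        ≤ (∑ i, (B *ᵥ u) i ^ 2) * ∑ i, (B *ᵥ x) i ^ 2 :=
          Finset.sum_mul_sq_le_sq_mul_sq _ _ _
      _ = (∑ i, (B *ᵥ u) i * (B *ᵥ u) i) * ∑ i, (B *ᵥ x) i * (B *ᵥ x) i := by
          simp [sq]
  have hSR1 : SR1 G H u = G - c⁻¹ • Matrix.vecMulVec v v := by
    rw [SR1, ← hAdef, ← hcdef, hkey]
  have hS1 : SR1 G H u - H = A - c⁻¹ • Matrix.vecMulVec v v := by
    rw [hSR1, hAdef, sub_right_comm]
  have hS2 : G - SR1 G H u = c⁻¹ • Matrix.vecMulVec v v := by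
    rw [hSR1, sub_sub_cancel]
  constructor
  · rw [hS1]
    refine .of_dotProduct_mulVec_nonneg (hAsym.sub hherm) fun x => ?_
    have : x ⬝ᵥ (A - c⁻¹ • Matrix.vecMulVec v v) *ᵥ x
        = x ⬝ᵥ A *ᵥ x - c⁻¹ * (v ⬝ᵥ x) ^ 2 := by
      rw [sub_mulVec, dotProduct_sub, smul_mulVec, dotProduct_smul, hquad x]
      rfl
    rw [show star x = x from rfl, this, sub_nonneg]
    calc c⁻¹ * (v ⬝ᵥ x) ^ 2 ≤ c⁻¹ * (c * (x ⬝ᵥ A *ᵥ x)) :=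
          mul_le_mul_of_nonneg_left (hCS x) (inv_nonneg.mpr hc.le)
      _ = x ⬝ᵥ A *ᵥ x := by field_simp
  · rw [hS2]
    refine .of_dotProduct_mulVec_nonneg hherm fun x => ?_
    rw [show star x = x from rfl, smul_mulVec, dotProduct_smul, hquad x]
    exact mul_nonneg (by positivity) (sq_nonneg _)
end

section
/- Let G, H be symmetric positive definite n×n matrices with H ⪯ G, and let u ∈ ℝⁿ with uᵀGu > 0 and uᵀHu > 0. Define BFGS(G,H,u) = G - (G u uᵀ G)/(uᵀGu) + (H u uᵀ H)/(uᵀHu). Then σ_H(BFGS(G,H,u)) = σ_H(G) - (uᵀGH⁻¹Gu)/(uᵀGu) + 1, where σ_H(X) := tr(H⁻¹X) - n; in particular σ_H(BFGS(G,H,u)) ≤ σ_H(G) since uᵀGH⁻¹Gu ≥ uᵀGu when H ⪯ G. -/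
open Matrix

lemma tr_vm {n : ℕ} (M : Matrix (Fin n) (Fin n) ℝ) (u v : Fin n → ℝ) :
    Matrix.trace (M * Matrix.vecMulVec u v) = v ⬝ᵥ M.mulVec u := by
  simp only [Matrix.trace, Matrix.diag, Matrix.mul_apply, Matrix.vecMulVec_apply,
    dotProduct, Matrix.mulVec, Finset.mul_sum]
  congr 1; ext i; congr 1; ext j; ring

lemma sym_dot {n : ℕ} {A : Matrix (Fin n) (Fin n) ℝ} (hA : Aᵀ = A) (x y : Fin n → ℝ) :
    A.mulVec x ⬝ᵥ y = x ⬝ᵥ A.mulVec y := by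
  rw [Matrix.dotProduct_mulVec, ← Matrix.vecMul_transpose, hA]

noncomputable def BFGS {n : ℕ} (G H : Matrix (Fin n) (Fin n) ℝ) (u : Fin n → ℝ) :
    Matrix (Fin n) (Fin n) ℝ :=
  G - (u ⬝ᵥ G.mulVec u)⁻¹ • (G * Matrix.vecMulVec u u * G) +
    (u ⬝ᵥ H.mulVec u)⁻¹ • (H * Matrix.vecMulVec u u * H)

theorem stmt13 {n : ℕ} (G H : Matrix (Fin n) (Fin n) ℝ)
    (hG : G.PosDef) (hH : H.PosDef) (hHG : (G - H).PosSemidef)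
    (u : Fin n → ℝ) (huG : 0 < u ⬝ᵥ G.mulVec u) (huH : 0 < u ⬝ᵥ H.mulVec u) :
    Matrix.trace (H⁻¹ * BFGS G H u) - n =
        (Matrix.trace (H⁻¹ * G) - n) -
          (u ⬝ᵥ (G * H⁻¹ * G).mulVec u) / (u ⬝ᵥ G.mulVec u) + 1 ∧
      Matrix.trace (H⁻¹ * BFGS G H u) - n ≤ Matrix.trace (H⁻¹ * G) - n := by
  have hdet : IsUnit H.det := isUnit_iff_ne_zero.mpr hH.det_pos.ne'
  have hHinv : H⁻¹ * H = 1 := Matrix.nonsing_inv_mul H hdet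
  have hHsym : Hᵀ = H := hH.isHermitian.eq
  have hGsym : Gᵀ = G := hG.isHermitian.eq
  have hHinvsym : (H⁻¹)ᵀ = H⁻¹ := hH.posSemidef.isHermitian.inv.eq
  have hu : H⁻¹.mulVec (H.mulVec u) = u := by
    rw [Matrix.mulVec_mulVec, hHinv, Matrix.one_mulVec]
  -- trace identity
  have hT1 : Matrix.trace (H⁻¹ * (G * Matrix.vecMulVec u u * G)) =
      u ⬝ᵥ (G * H⁻¹ * G).mulVec u := by
    simp only [← Matrix.mul_assoc]
    rw [Matrix.trace_mul_comm]
    simp only [← Matrix.mul_assoc]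
    rw [tr_vm]
  have hT2 : Matrix.trace (H⁻¹ * (H * Matrix.vecMulVec u u * H)) = u ⬝ᵥ H.mulVec u := by
    simp only [← Matrix.mul_assoc]
    rw [hHinv, Matrix.one_mul, Matrix.trace_mul_comm, tr_vm]
  have htr : Matrix.trace (H⁻¹ * BFGS G H u) =
      Matrix.trace (H⁻¹ * G) - (u ⬝ᵥ (G * H⁻¹ * G).mulVec u) / (u ⬝ᵥ G.mulVec u) + 1 := by
    unfold BFGS
    rw [Matrix.mul_add, Matrix.mul_sub, Matrix.mul_smul, Matrix.mul_smul,
      Matrix.trace_add, Matrix.trace_sub, Matrix.trace_smul, Matrix.trace_smul, hT1, hT2,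
      smul_eq_mul, smul_eq_mul, inv_mul_cancel₀ (ne_of_gt huH)]
    rw [div_eq_inv_mul]
  -- inequality part
  have key : u ⬝ᵥ G.mulVec u ≤ u ⬝ᵥ (G * H⁻¹ * G).mulVec u := by
    set w : Fin n → ℝ := G.mulVec u - H.mulVec u with hw
    have h1 : 0 ≤ w ⬝ᵥ H⁻¹.mulVec w := by simpa using hH.inv.posSemidef.dotProduct_mulVec_nonneg w
    have h2 : 0 ≤ u ⬝ᵥ (G - H).mulVec u := by simpa using hHG.dotProduct_mulVec_nonneg u
    have a1 : G.mulVec u ⬝ᵥ H⁻¹.mulVec (G.mulVec u) = u ⬝ᵥ (G * H⁻¹ * G).mulVec u := by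
      rw [sym_dot hGsym, Matrix.mulVec_mulVec, Matrix.mulVec_mulVec, Matrix.mul_assoc]
    have a2 : G.mulVec u ⬝ᵥ u = u ⬝ᵥ G.mulVec u := sym_dot hGsym u u
    have a3 : H.mulVec u ⬝ᵥ H⁻¹.mulVec (G.mulVec u) = u ⬝ᵥ G.mulVec u := by
      rw [← sym_dot hHinvsym, hu]
    have a4 : H.mulVec u ⬝ᵥ u = u ⬝ᵥ H.mulVec u := sym_dot hHsym u u
    have e1 : w ⬝ᵥ H⁻¹.mulVec w =
        u ⬝ᵥ (G * H⁻¹ * G).mulVec u - 2 * (u ⬝ᵥ G.mulVec u) + u ⬝ᵥ H.mulVec u := by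
      rw [hw, Matrix.mulVec_sub, hu, sub_dotProduct, dotProduct_sub, dotProduct_sub,
        a1, a2, a3, a4]
      ring
    have e2 : u ⬝ᵥ (G - H).mulVec u = u ⬝ᵥ G.mulVec u - u ⬝ᵥ H.mulVec u := by
      rw [Matrix.sub_mulVec, dotProduct_sub]
    linarith
  refine ⟨by rw [htr]; ring, ?_⟩
  rw [htr]
  have : 1 ≤ (u ⬝ᵥ (G * H⁻¹ * G).mulVec u) / (u ⬝ᵥ G.mulVec u) :=
    (one_le_div huG).mpr key
  linarith
end

section
/- Let A ⪰ 0 be a nonzero symmetric positive semidefinite n×n matrix. Then there exists a standard basis vector eᵢ such that (eᵢᵀA²eᵢ)/(eᵢᵀAeᵢ) ≥ tr(A)/n (interpreting the ratio when eᵢᵀAeᵢ = 0 appropriately: choose i maximizing the ratio over indices with eᵢᵀAeᵢ > 0). -/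
open Matrix

theorem stmt15 {n : ℕ} (A : Matrix (Fin n) (Fin n) ℝ)
    (hA : A.PosSemidef) (hne : A ≠ 0) :
    ∃ i : Fin n, 0 < A i i ∧ Matrix.trace A / n ≤ (A * A) i i / A i i := by
  have hsymm : ∀ i j, A j i = A i j := fun i j => by
    conv_lhs => rw [← hA.1]
    simp [conjTranspose_apply]
  have hquad : ∀ i : Fin n, (Pi.single i 1 : Fin n → ℝ) ⬝ᵥ A *ᵥ Pi.single i 1 = A i i := by
    intro i
    rw [mulVec_single]
    simp [single_dotProduct]
  have hdiag : ∀ i, 0 ≤ A i i := by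
    intro i
    have := hA.dotProduct_mulVec_nonneg (Pi.single i 1)
    rwa [star_trivial, hquad i] at this
  -- diagonal zero implies row zero
  have hrow : ∀ i, A i i = 0 → ∀ j, A i j = 0 := by
    intro i hi j
    have h0 : A *ᵥ Pi.single i 1 = 0 := by
      rw [← hA.dotProduct_mulVec_zero_iff]
      rw [star_trivial, hquad i, hi]
    have h1 := congrFun h0 j
    rw [mulVec_single] at h1
    simp only [mul_one, Pi.zero_apply, Pi.smul_apply, MulOpposite.op_one, one_smul, col_apply] at h1
    rw [← hsymm i j]; exact h1
  have hAA : ∀ i, (A * A) i i = ∑ j, (A i j) ^ 2 := by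
    intro i
    rw [Matrix.mul_apply]
    congr 1; funext j; rw [hsymm i j]; ring
  have hAAnn : ∀ i, (A i i) ^ 2 ≤ (A * A) i i := by
    intro i
    rw [hAA i]
    exact Finset.single_le_sum (f := fun j => (A i j)^2) (fun j _ => sq_nonneg _)
      (Finset.mem_univ i)
  have hn : 0 < n := by
    rcases Nat.eq_zero_or_pos n with h | h
    · exfalso; apply hne; subst h; ext i; exact i.elim0
    · exact h
  have htr : 0 < Matrix.trace A := by
    rcases (Finset.sum_nonneg fun i _ => hdiag i).lt_or_eq with h | h
    · exact h
    · exfalso; apply hne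
      have hz : ∀ i, A i i = 0 := by
        intro i
        have := (Finset.sum_eq_zero_iff_of_nonneg (fun i _ => hdiag i)).mp h.symm
        exact this i (Finset.mem_univ i)
      ext i j
      exact hrow i (hz i) j
  -- Cauchy-Schwarz: (tr A)^2 ≤ n * tr (A*A)
  have hCS : (Matrix.trace A) ^ 2 ≤ (n : ℝ) * ∑ i, (A * A) i i := by
    calc (Matrix.trace A) ^ 2 = (∑ i, A i i) ^ 2 := by rw [Matrix.trace]; rfl
    _ ≤ (Finset.univ : Finset (Fin n)).card * ∑ i, (A i i) ^ 2 :=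
        sq_sum_le_card_mul_sum_sq
    _ = (n : ℝ) * ∑ i, (A i i) ^ 2 := by simp
    _ ≤ (n : ℝ) * ∑ i, (A * A) i i := by
        apply mul_le_mul_of_nonneg_left _ (by positivity)
        exact Finset.sum_le_sum fun i _ => hAAnn i
  by_contra hcon
  push_neg at hcon
  -- obtain index with positive diagonal
  obtain ⟨i₀, hi₀⟩ : ∃ i, 0 < A i i := by
    by_contra h
    push_neg at h
    have : ∀ i, A i i = 0 := fun i => le_antisymm (h i) (hdiag i)
    simp only [Matrix.trace, Matrix.diag] at htr
    rw [Finset.sum_congr rfl (fun i _ => this i)] at htr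
    simp at htr
  set c : ℝ := Matrix.trace A / n with hc
  have hsum : ∑ i, (A * A) i i < ∑ i, c * A i i := by
    apply Finset.sum_lt_sum
    · intro i _
      rcases (hdiag i).lt_or_eq with h | h
      · exact le_of_lt (by
          have := hcon i h
          calc (A * A) i i = ((A * A) i i / A i i) * A i i := by field_simp
          _ < c * A i i := by exact mul_lt_mul_of_pos_right this h)
      · rw [hAA i]
        have : ∀ j, A i j = 0 := hrow i h.symm
        simp [this, ← h]
    · refine ⟨i₀, Finset.mem_univ _, ?_⟩
      have := hcon i₀ hi₀
      calc (A * A) i₀ i₀ = ((A * A) i₀ i₀ / A i₀ i₀) * A i₀ i₀ := by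
            field_simp
      _ < c * A i₀ i₀ := mul_lt_mul_of_pos_right this hi₀
  have hsum2 : ∑ i, c * A i i = (Matrix.trace A) ^ 2 / n := by
    rw [← Finset.mul_sum, hc]
    have : ∑ i, A i i = Matrix.trace A := rfl
    rw [this]; ring
  rw [hsum2] at hsum
  have : (Matrix.trace A) ^ 2 / n ≤ ∑ i, (A * A) i i := by
    rw [div_le_iff₀ (by positivity)]
    linarith [hCS]
  linarith
end

section
/- Let Ĥ₀ be a symmetric invertible n×n matrix whose singular values lie in [μ, L] with 0 < μ ≤ L, and let Ĥ be symmetric with ‖Ĥ - Ĥ₀‖ ≤ L₂·D where D = μ²/(8·L₂·L) and L₂ > 0. Then (μ²/2)·I ⪯ Ĥ² ⪯ 4L²·I. -/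
open Matrix

noncomputable def specNorm {n : ℕ} (A : Matrix (Fin n) (Fin n) ℝ) : ℝ :=
  ‖Matrix.toEuclideanCLM (𝕜 := ℝ) A‖

lemma sq_herm {n : ℕ} {M : Matrix (Fin n) (Fin n) ℝ} (hM : M.IsHermitian) :
    (M * M).IsHermitian := by
  rw [Matrix.IsHermitian, conjTranspose_mul, hM.eq]

lemma smul_one_herm {n : ℕ} (c : ℝ) :
    ((c • 1 : Matrix (Fin n) (Fin n) ℝ)).IsHermitian := by
  simp [Matrix.IsHermitian, conjTranspose_smul]

lemma quad_sq {n : ℕ} {M : Matrix (Fin n) (Fin n) ℝ} (hM : M.IsHermitian)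
    (x : Fin n → ℝ) : x ⬝ᵥ (M * M) *ᵥ x = (M *ᵥ x) ⬝ᵥ (M *ᵥ x) := by
  have ht : Mᵀ = M := by
    rw [← conjTranspose_eq_transpose_of_trivial]; exact hM
  calc x ⬝ᵥ (M * M) *ᵥ x = (x ᵥ* M) ⬝ᵥ M *ᵥ x := by
        rw [← mulVec_mulVec, dotProduct_mulVec]
    _ = (M *ᵥ x) ⬝ᵥ (M *ᵥ x) := by rw [← mulVec_transpose, ht]

lemma psd_sub_smul {n : ℕ} (c : ℝ) {M : Matrix (Fin n) (Fin n) ℝ} (hM : M.IsHermitian)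
    (h : ∀ x : Fin n → ℝ, c * (x ⬝ᵥ x) ≤ (M *ᵥ x) ⬝ᵥ (M *ᵥ x)) :
    (M * M - c • 1).PosSemidef := by
  refine PosSemidef.of_dotProduct_mulVec_nonneg ((sq_herm hM).sub (smul_one_herm c)) fun x => ?_
  simp only [star_trivial, sub_mulVec, smul_mulVec, one_mulVec, dotProduct_sub,
    dotProduct_smul, smul_eq_mul, sub_nonneg, quad_sq hM]
  exact h x

lemma psd_smul_sub {n : ℕ} (c : ℝ) {M : Matrix (Fin n) (Fin n) ℝ} (hM : M.IsHermitian)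
    (h : ∀ x : Fin n → ℝ, (M *ᵥ x) ⬝ᵥ (M *ᵥ x) ≤ c * (x ⬝ᵥ x)) :
    (c • 1 - M * M).PosSemidef := by
  refine PosSemidef.of_dotProduct_mulVec_nonneg ((smul_one_herm c).sub (sq_herm hM)) fun x => ?_
  simp only [star_trivial, sub_mulVec, smul_mulVec, one_mulVec, dotProduct_sub,
    dotProduct_smul, smul_eq_mul, sub_nonneg, quad_sq hM]
  exact h x

lemma spec_sandwich {n : ℕ} {M : Matrix (Fin n) (Fin n) ℝ} (hM : M.IsHermitian) {a b : ℝ}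
    (h : ∀ i, a ≤ hM.eigenvalues i ^ 2 ∧ hM.eigenvalues i ^ 2 ≤ b) :
    (M * M - a • 1).PosSemidef ∧ (b • 1 - M * M).PosSemidef := by
  set U : Matrix (Fin n) (Fin n) ℝ := (hM.eigenvectorUnitary : Matrix (Fin n) (Fin n) ℝ)
    with hUdef
  have hU1 : star U * U = 1 := (Unitary.mem_iff.mp hM.eigenvectorUnitary.prop).1
  have hU2 : U * star U = 1 := (Unitary.mem_iff.mp hM.eigenvectorUnitary.prop).2
  have hD : (RCLike.ofReal ∘ hM.eigenvalues : Fin n → ℝ) = hM.eigenvalues := by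
    funext i; simp
  have hMM : M * M = U * diagonal (fun i => hM.eigenvalues i ^ 2) * star U := by
    conv_lhs => rw [hM.spectral_theorem]
    rw [hD]
    set D := diagonal hM.eigenvalues with hDdef
    calc U * D * star U * (U * D * star U)
        = U * (D * (star U * U) * D) * star U := by noncomm_ring
      _ = U * diagonal (fun i => hM.eigenvalues i ^ 2) * star U := by
          rw [hU1, mul_one, hDdef, diagonal_mul_diagonal]
          congr 1; congr 1; funext i; ring
  have hdsub : ∀ (d : Fin n → ℝ) (c : ℝ), diagonal d - diagonal (fun _ => c)
      = diagonal (fun i => d i - c) := fun d c => by rw [diagonal_sub]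
  have hsm : ∀ c : ℝ, (c • 1 : Matrix (Fin n) (Fin n) ℝ)
      = U * diagonal (fun _ => c) * star U := by
    intro c
    have : U * diagonal (fun _ : Fin n => c) * star U = c • 1 := by
      rw [← Matrix.smul_one_eq_diagonal, mul_smul_comm, smul_mul_assoc, mul_one, hU2]
    exact this.symm
  constructor
  · have : M * M - a • 1 = U * diagonal (fun i => hM.eigenvalues i ^ 2 - a) * star U := by
      rw [hMM, hsm a, ← sub_mul, ← mul_sub, hdsub]
    rw [this, Matrix.star_eq_conjTranspose]
    exact (posSemidef_diagonal_iff.mpr fun i => by linarith [(h i).1]).mul_mul_conjTranspose_same U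
  · have : b • 1 - M * M = U * diagonal (fun i => b - hM.eigenvalues i ^ 2) * star U := by
      rw [hMM, hsm b, ← sub_mul, ← mul_sub, diagonal_sub]
    rw [this, Matrix.star_eq_conjTranspose]
    exact (posSemidef_diagonal_iff.mpr fun i => by linarith [(h i).2]).mul_mul_conjTranspose_same U

lemma arith0 (a s : ℝ) (ha : 0 ≤ a) (hs : 0 ≤ s) (h : a ^ 2 ≤ s ^ 2) : a ≤ s := by
  nlinarith

lemma arith1 (μ r s : ℝ) (hμ : 0 < μ) (hr : 0 ≤ r) (hs : 0 ≤ s)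
    (h : 7 / 8 * μ * r ≤ s) : μ ^ 2 / 2 * r ^ 2 ≤ s ^ 2 := by
  have h0 : 0 ≤ 7 / 8 * μ * r := mul_nonneg (by linarith) hr
  nlinarith [mul_le_mul h h h0 hs, sq_nonneg (μ * r)]

lemma arith2 (L r s : ℝ) (hL : 0 < L) (hr : 0 ≤ r) (hs : 0 ≤ s)
    (h : s ≤ 9 / 8 * L * r) : s ^ 2 ≤ 4 * L ^ 2 * r ^ 2 := by
  have h0 : 0 ≤ 9 / 8 * L * r := mul_nonneg (by linarith) hr
  nlinarith [mul_le_mul h h hs h0, sq_nonneg (L * r)]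

theorem stmt19 {n : ℕ} (μ L L2 : ℝ) (hμ : 0 < μ) (hμL : μ ≤ L) (hL2 : 0 < L2)
    (H0 Hh : Matrix (Fin n) (Fin n) ℝ)
    (hH0 : H0.IsHermitian) (hinv : IsUnit H0)
    (hsv : ∀ i, μ ≤ |hH0.eigenvalues i| ∧ |hH0.eigenvalues i| ≤ L)
    (hHh : Hh.IsHermitian)
    (hclose : specNorm (Hh - H0) ≤ L2 * (μ ^ 2 / (8 * L2 * L))) :
    (Hh * Hh - (μ ^ 2 / 2) • 1).PosSemidef ∧
      ((4 * L ^ 2) • (1 : Matrix (Fin n) (Fin n) ℝ) - Hh * Hh).PosSemidef := by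
  have hL : 0 < L := lt_of_lt_of_le hμ hμL
  set f := toEuclideanCLM (𝕜 := ℝ) Hh with hfdef
  set g := toEuclideanCLM (𝕜 := ℝ) H0 with hgdef
  -- vector/norm dictionary
  have hnorm : ∀ v : Fin n → ℝ,
      v ⬝ᵥ v = ‖(WithLp.equiv 2 (Fin n → ℝ)).symm v‖ ^ 2 := by
    intro v
    have h1 := EuclideanSpace.inner_toLp_toLp (𝕜 := ℝ) v v
    rw [star_trivial] at h1
    rw [← h1, real_inner_self_eq_norm_sq, WithLp.equiv_symm_apply]
  have hmv : ∀ (A : Matrix (Fin n) (Fin n) ℝ) (v : Fin n → ℝ),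
      (A *ᵥ v) ⬝ᵥ (A *ᵥ v)
        = ‖toEuclideanCLM (𝕜 := ℝ) A ((WithLp.equiv 2 (Fin n → ℝ)).symm v)‖ ^ 2 := by
    intro A v
    rw [hnorm]; rfl
  -- spectral bounds on H0
  have hsq : ∀ i, μ ^ 2 ≤ hH0.eigenvalues i ^ 2 ∧ hH0.eigenvalues i ^ 2 ≤ L ^ 2 := by
    intro i
    obtain ⟨h1, h2⟩ := hsv i
    constructor
    · calc μ ^ 2 ≤ |hH0.eigenvalues i| ^ 2 := pow_le_pow_left₀ hμ.le h1 2
        _ = hH0.eigenvalues i ^ 2 := sq_abs _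
    · calc hH0.eigenvalues i ^ 2 = |hH0.eigenvalues i| ^ 2 := (sq_abs _).symm
        _ ≤ L ^ 2 := pow_le_pow_left₀ (abs_nonneg _) h2 2
  have hquadH0 : ∀ x : Fin n → ℝ,
      μ ^ 2 * (x ⬝ᵥ x) ≤ (H0 *ᵥ x) ⬝ᵥ (H0 *ᵥ x) ∧
      (H0 *ᵥ x) ⬝ᵥ (H0 *ᵥ x) ≤ L ^ 2 * (x ⬝ᵥ x) := by
    intro x
    obtain ⟨P1, P2⟩ := spec_sandwich hH0 hsq
    have h1 := P1.dotProduct_mulVec_nonneg x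
    have h2 := P2.dotProduct_mulVec_nonneg x
    simp only [star_trivial, sub_mulVec, smul_mulVec, one_mulVec, dotProduct_sub,
      dotProduct_smul, smul_eq_mul, sub_nonneg, quad_sq hH0] at h1 h2
    exact ⟨h1, h2⟩
  -- operator norm of the perturbation
  have hδ : ‖f - g‖ ≤ μ ^ 2 / (8 * L) := by
    have hfg : toEuclideanCLM (𝕜 := ℝ) (Hh - H0) = f - g := map_sub _ _ _
    have heq : L2 * (μ ^ 2 / (8 * L2 * L)) = μ ^ 2 / (8 * L) := by
      field_simp
    rw [← hfg, ← heq]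
    exact hclose
  have hδμ : μ ^ 2 / (8 * L) ≤ μ / 8 := by
    rw [div_le_div_iff₀ (by positivity) (by norm_num)]; nlinarith
  have hδL : μ ^ 2 / (8 * L) ≤ L / 8 := by
    rw [div_le_div_iff₀ (by positivity) (by norm_num)]; nlinarith
  have key : ∀ x : Fin n → ℝ,
      μ ^ 2 / 2 * (x ⬝ᵥ x) ≤ (Hh *ᵥ x) ⬝ᵥ (Hh *ᵥ x) ∧
      (Hh *ᵥ x) ⬝ᵥ (Hh *ᵥ x) ≤ 4 * L ^ 2 * (x ⬝ᵥ x) := by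
    intro x
    set y := (WithLp.equiv 2 (Fin n → ℝ)).symm x with hy0
    have hy := hnorm x
    have hfx := hmv Hh x
    have hgx := hmv H0 x
    rw [← hy0] at hfx hgx
    rw [← hfdef] at hfx
    rw [← hgdef] at hgx
    obtain ⟨q1, q2⟩ := hquadH0 x
    rw [hy, hgx] at q1 q2
    have hg1 : μ * ‖y‖ ≤ ‖g y‖ := by
      refine arith0 _ _ (mul_nonneg hμ.le (norm_nonneg y)) (norm_nonneg (g y)) ?_
      calc (μ * ‖y‖) ^ 2 = μ ^ 2 * ‖y‖ ^ 2 := by ring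
        _ ≤ ‖g y‖ ^ 2 := q1
    have hg2 : ‖g y‖ ≤ L * ‖y‖ := by
      refine arith0 _ _ (norm_nonneg (g y)) (mul_nonneg hL.le (norm_nonneg y)) ?_
      calc ‖g y‖ ^ 2 ≤ L ^ 2 * ‖y‖ ^ 2 := q2
        _ = (L * ‖y‖) ^ 2 := by ring
    have hdist : ‖f y - g y‖ ≤ μ ^ 2 / (8 * L) * ‖y‖ := by
      have h1 := (f - g).le_opNorm y
      rw [ContinuousLinearMap.sub_apply] at h1
      exact le_trans h1 (mul_le_mul_of_nonneg_right hδ (norm_nonneg y))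
    have hdμ := mul_le_mul_of_nonneg_right hδμ (norm_nonneg y)
    have hdL := mul_le_mul_of_nonneg_right hδL (norm_nonneg y)
    have hlow : ‖g y‖ - ‖f y - g y‖ ≤ ‖f y‖ := by
      have h1 := norm_sub_norm_le (g y) (f y)
      rw [norm_sub_rev] at h1
      linarith
    have hhigh : ‖f y‖ ≤ ‖g y‖ + ‖f y - g y‖ := by
      have h1 := norm_sub_norm_le (f y) (g y)
      linarith
    have hf1 : 7 / 8 * μ * ‖y‖ ≤ ‖f y‖ := by linarith
    have hf2 : ‖f y‖ ≤ 9 / 8 * L * ‖y‖ := by linarith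
    constructor
    · rw [hy, hfx]
      exact arith1 μ ‖y‖ ‖f y‖ hμ (norm_nonneg y) (norm_nonneg (f y)) hf1
    · rw [hy, hfx]
      calc ‖f y‖ ^ 2 ≤ 4 * L ^ 2 * ‖y‖ ^ 2 :=
            arith2 L ‖y‖ ‖f y‖ hL (norm_nonneg y) (norm_nonneg (f y)) hf2
        _ = 4 * L ^ 2 * ‖y‖ ^ 2 := rfl
  exact ⟨psd_sub_smul _ hHh fun x => (key x).1, psd_smul_sub _ hHh fun x => (key x).2⟩
end
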